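/- For m ∈ ℝ and v ≥ 0, let N(m, v) denote the Gaussian probability measure on ℝ with mean m and variance v (the Dirac mass at m if v = 0). Define W₂²(μ, ν) as the infimum over all couplings π of μ and ν of ∫_{ℝ×ℝ} (x − y)² dπ(x, y). Then for all m_a, m_b, m_γ ∈ ℝ, all σ_a, σ_b, σ_γ > 0, and all p_a, p_b ∈ (0, 1]: W₂²(N(m_a + m_γ, σ_a² + p_a²σ_γ²), N(m_b + m_γ, σ_b² + p_b²σ_γ²)) ≥ W₂²(N(m_a, σ_a²), N(m_b, σ_b²)) + σ_γ²·(p_a − p_b)² − 2·((σ_a·p_b·σ_γ)² + (p_a·σ_b·σ_γ)²) / √(2(σ_a·σ_b)² + 2(p_a·p_b·σ_γ²)² + (σ_a·p_b·σ_γ)² + (p_a·σ_b·σ_γ)²). -/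

import Mathlib

open MeasureTheory ProbabilityTheory

/-- The squared 2-Wasserstein distance between probability measures on `ℝ`: the infimum over all
couplings `π` of `μ` and `ν` of `∫ (x − y)² dπ(x, y)`. -/
noncomputable def W2sq (μ ν : Measure ℝ) : ℝ :=
  sInf {r : ℝ | ∃ π : Measure (ℝ × ℝ), IsProbabilityMeasure π ∧
    π.map Prod.fst = μ ∧ π.map Prod.snd = ν ∧ r = ∫ p : ℝ × ℝ, (p.1 - p.2) ^ 2 ∂π}

/-! Over any coupling, `∫ (x - y)²` equals the squared difference of the means plus
`Var X - 2 Cov(X, Y) + Var Y`, and Cauchy–Schwarz bounds the covariance by `σ_X σ_Y`; an affine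
coupling `x ↦ (x, c x + d)` with `c ≥ 0` attains this bound. Since Gaussians are affine images of
each other, `W₂²(N(m₁, σ₁²), N(m₂, σ₂²)) = (m₁ - m₂)² + (σ₁ - σ₂)²`, and the theorem becomes an
inequality between reals: with `A, B` the two interpolated variances, `Q = σ_a σ_b + p_a p_b σ_γ²`
and `T, S` the numerator and radicand of the error term, it reads `√(AB) ≤ Q + T / √S`. This follows
from `AB ≤ Q² + T`, `S ≤ 2Q² + T` and `√(Q² + T) - Q = T / (√(Q² + T) + Q)`. -/

open scoped NNReal

namespace ProbabilityTheory

variable {Ω : Type*} {mΩ : MeasurableSpace Ω} {μ : Measure Ω} {X Y : Ω → ℝ}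

lemma sq_covariance_le_variance_mul_variance [IsFiniteMeasure μ] (hX : MemLp X 2 μ)
    (hY : MemLp Y 2 μ) : cov[X, Y; μ] ^ 2 ≤ Var[X; μ] * Var[Y; μ] := by
  have hquad (t : ℝ) : 0 ≤ Var[Y; μ] * (t * t) + (-2 * cov[X, Y; μ]) * t + Var[X; μ] := by
    have := variance_nonneg (fun ω ↦ X ω - t * Y ω) μ
    rw [variance_fun_sub hX (hY.const_mul t), variance_const_mul, covariance_const_mul_right]
      at this
    linarith
  have := discrim_le_zero hquad
  rw [discrim] at this
  linarith

lemma covariance_le_sqrt_variance_mul_sqrt_variance [IsFiniteMeasure μ] (hX : MemLp X 2 μ)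
    (hY : MemLp Y 2 μ) : cov[X, Y; μ] ≤ √Var[X; μ] * √Var[Y; μ] := by
  rw [← Real.sqrt_mul (variance_nonneg X μ)]
  exact (le_abs_self _).trans (Real.abs_le_sqrt (sq_covariance_le_variance_mul_variance hX hY))

lemma integral_sub_sq [IsProbabilityMeasure μ] (hX : MemLp X 2 μ) (hY : MemLp Y 2 μ) :
    ∫ ω, (X ω - Y ω) ^ 2 ∂μ
      = (μ[X] - μ[Y]) ^ 2 + (Var[X; μ] - 2 * cov[X, Y; μ] + Var[Y; μ]) := by
  have := variance_eq_sub (hX.sub hY)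
  rw [variance_sub hX hY] at this
  simp only [Pi.pow_apply, Pi.sub_apply] at this
  rw [this, integral_sub (hX.integrable one_le_two) (hY.integrable one_le_two)]
  ring

lemma sq_sub_add_sq_sub_sqrt_variance_le_integral_sub_sq [IsProbabilityMeasure μ]
    (hX : MemLp X 2 μ) (hY : MemLp Y 2 μ) :
    (μ[X] - μ[Y]) ^ 2 + (√Var[X; μ] - √Var[Y; μ]) ^ 2 ≤ ∫ ω, (X ω - Y ω) ^ 2 ∂μ := by
  rw [integral_sub_sq hX hY, sub_sq (√_), Real.sq_sqrt (variance_nonneg X μ),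
    Real.sq_sqrt (variance_nonneg Y μ)]
  linarith [covariance_le_sqrt_variance_mul_sqrt_variance hX hY]

end ProbabilityTheory

lemma W2sq_le_integral {μ ν : Measure ℝ} (π : Measure (ℝ × ℝ)) [IsProbabilityMeasure π]
    (hfst : π.map Prod.fst = μ) (hsnd : π.map Prod.snd = ν) :
    W2sq μ ν ≤ ∫ p, (p.1 - p.2) ^ 2 ∂π :=
  csInf_le ⟨0, by rintro r ⟨π, -, -, -, rfl⟩; exact integral_nonneg fun p ↦ sq_nonneg _⟩
    ⟨π, inferInstance, hfst, hsnd, rfl⟩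

lemma le_W2sq {μ ν : Measure ℝ} [IsProbabilityMeasure μ] [IsProbabilityMeasure ν] {c : ℝ}
    (h : ∀ π : Measure (ℝ × ℝ), IsProbabilityMeasure π → π.map Prod.fst = μ →
      π.map Prod.snd = ν → c ≤ ∫ p, (p.1 - p.2) ^ 2 ∂π) :
    c ≤ W2sq μ ν :=
  le_csInf ⟨_, μ.prod ν, inferInstance, by simp, by simp, rfl⟩
    (by rintro r ⟨π, hπ, hfst, hsnd, rfl⟩; exact h π hπ hfst hsnd)

lemma le_W2sq_of_memLp {μ ν : Measure ℝ} [IsProbabilityMeasure μ] [IsProbabilityMeasure ν]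
    (hμ : MemLp id 2 μ) (hν : MemLp id 2 ν) :
    (∫ x, x ∂μ - ∫ x, x ∂ν) ^ 2 + (√Var[id; μ] - √Var[id; ν]) ^ 2 ≤ W2sq μ ν := by
  refine le_W2sq fun π _ hfst hsnd ↦ ?_
  subst hfst hsnd
  have hX : MemLp Prod.fst 2 π :=
    (memLp_map_measure_iff aestronglyMeasurable_id measurable_fst.aemeasurable).1 hμ
  have hY : MemLp Prod.snd 2 π :=
    (memLp_map_measure_iff aestronglyMeasurable_id measurable_snd.aemeasurable).1 hν
  rw [integral_map measurable_fst.aemeasurable measurable_id'.aestronglyMeasurable,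
    integral_map measurable_snd.aemeasurable measurable_id'.aestronglyMeasurable,
    variance_id_map measurable_fst.aemeasurable, variance_id_map measurable_snd.aemeasurable]
  exact sq_sub_add_sq_sub_sqrt_variance_le_integral_sub_sq hX hY

theorem W2sq_map_affine {μ : Measure ℝ} [IsProbabilityMeasure μ] (hμ : MemLp id 2 μ) {c : ℝ}
    (hc : 0 ≤ c) (d : ℝ) :
    W2sq μ (μ.map fun x ↦ c * x + d)
      = (∫ x, x ∂μ - ∫ x, x ∂μ.map (fun x ↦ c * x + d)) ^ 2
        + (√Var[id; μ] - √Var[id; μ.map (fun x ↦ c * x + d)]) ^ 2 := by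
  set f : ℝ → ℝ := fun x ↦ c * x + d
  have hf : Measurable f := by fun_prop
  have hf2 : MemLp f 2 μ := (hμ.const_mul c).add (memLp_const d)
  have hμ1 : Integrable (fun x ↦ c * x) μ := (hμ.integrable one_le_two).const_mul c
  have hmean : ∫ x, f x ∂μ = c * ∫ x, x ∂μ + d := by
    rw [integral_add hμ1 (integrable_const d), integral_const_mul]
    simp
  have hvar : Var[f; μ] = c ^ 2 * Var[id; μ] := by
    rw [variance_add_const (by fun_prop), variance_const_mul]
    rfl
  have hcov : cov[id, f; μ] = c * Var[id; μ] := by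
    rw [covariance_add_const_right hμ1, covariance_const_mul_right]
    exact congrArg (c * ·) (covariance_self aemeasurable_id)
  have : IsProbabilityMeasure (μ.map f) := Measure.isProbabilityMeasure_map hf.aemeasurable
  refine le_antisymm ?_
    (le_W2sq_of_memLp hμ ((memLp_map_measure_iff aestronglyMeasurable_id hf.aemeasurable).2 hf2))
  have hg : Measurable fun x ↦ (x, f x) := by fun_prop
  have : IsProbabilityMeasure (μ.map fun x ↦ (x, f x)) :=
    Measure.isProbabilityMeasure_map hg.aemeasurable
  calc W2sq μ (μ.map f)
      ≤ ∫ p, (p.1 - p.2) ^ 2 ∂μ.map fun x ↦ (x, f x) :=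
        W2sq_le_integral _ (by rw [Measure.map_map measurable_fst hg]; exact Measure.map_id)
          (by rw [Measure.map_map measurable_snd hg]; rfl)
    _ = ∫ x, (id x - f x) ^ 2 ∂μ := integral_map hg.aemeasurable (by fun_prop)
    _ = (∫ x, x ∂μ - ∫ x, x ∂μ.map f) ^ 2 + (√Var[id; μ] - √Var[id; μ.map f]) ^ 2 := by
      rw [integral_sub_sq hμ hf2, integral_map hf.aemeasurable
        measurable_id'.aestronglyMeasurable, variance_id_map hf.aemeasurable, hcov, hvar, hmean,
        Real.sqrt_mul' _ (variance_nonneg _ _), Real.sqrt_sq hc]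
      simp only [id]
      linear_combination (-(1 - c) ^ 2) * Real.sq_sqrt (variance_nonneg id μ)

lemma gaussianReal_eq_map_affine (m₁ m₂ : ℝ) {v₁ : ℝ≥0} (hv₁ : v₁ ≠ 0) (v₂ : ℝ≥0) :
    gaussianReal m₂ v₂
      = (gaussianReal m₁ v₁).map fun x ↦ √(v₂ / v₁) * x + (m₂ - √(v₂ / v₁) * m₁) := by
  rw [show (fun x ↦ √(v₂ / v₁) * x + (m₂ - √(v₂ / v₁) * m₁))
      = (· + (m₂ - √(v₂ / v₁) * m₁)) ∘ (√(v₂ / v₁) * ·) from rfl,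
    ← Measure.map_map (measurable_add_const _) (measurable_const_mul _),
    gaussianReal_map_const_mul, gaussianReal_map_add_const]
  congr 1
  · ring
  · ext
    push_cast
    rw [Real.sq_sqrt (by positivity)]
    field_simp [NNReal.coe_ne_zero.2 hv₁]

theorem W2sq_gaussianReal (m₁ m₂ : ℝ) {v₁ : ℝ≥0} (hv₁ : v₁ ≠ 0) (v₂ : ℝ≥0) :
    W2sq (gaussianReal m₁ v₁) (gaussianReal m₂ v₂) = (m₁ - m₂) ^ 2 + (√v₁ - √v₂) ^ 2 := by
  rw [gaussianReal_eq_map_affine m₁ m₂ hv₁ v₂,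
    W2sq_map_affine (memLp_id_gaussianReal' 2 ENNReal.ofNat_ne_top) (Real.sqrt_nonneg _),
    ← gaussianReal_eq_map_affine m₁ m₂ hv₁ v₂, integral_id_gaussianReal, integral_id_gaussianReal,
    variance_id_gaussianReal, variance_id_gaussianReal]

lemma sqrt_le_add_div_sqrt {P Q T S : ℝ} (hQ : 0 ≤ Q) (hT : 0 ≤ T) (hP : P ≤ Q ^ 2 + T)
    (hS : 0 < S) (hSQ : S ≤ 2 * Q ^ 2 + T) : √P ≤ Q + T / √S := by
  set R := √(Q ^ 2 + T)
  have hR : R ^ 2 = Q ^ 2 + T := Real.sq_sqrt (by positivity)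
  have hQR : Q ≤ R := Real.le_sqrt_of_sq_le (by linarith)
  have hSR : √S ≤ R + Q := Real.sqrt_le_iff.2 ⟨by positivity, by nlinarith⟩
  have hRQ : R - Q ≤ T / √S := by
    rw [le_div_iff₀ (Real.sqrt_pos.2 hS)]
    nlinarith [mul_le_mul_of_nonneg_left hSR (sub_nonneg.2 hQR)]
  linarith [Real.sqrt_le_sqrt hP]

lemma sq_sub_add_sq_sub_sub_le_sq_sqrt_sub_sqrt {a b u w : ℝ} (hab : 0 < a * b)
    (huw : 0 ≤ u * w) :
    (a - b) ^ 2 + (u - w) ^ 2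
        - 2 * (((a * w) ^ 2 + (u * b) ^ 2)
          / √(2 * (a * b) ^ 2 + 2 * (u * w) ^ 2 + (a * w) ^ 2 + (u * b) ^ 2))
      ≤ (√(a ^ 2 + u ^ 2) - √(b ^ 2 + w ^ 2)) ^ 2 := by
  have key := sqrt_le_add_div_sqrt (P := (a ^ 2 + u ^ 2) * (b ^ 2 + w ^ 2)) (Q := a * b + u * w)
    (T := (a * w) ^ 2 + (u * b) ^ 2)
    (S := 2 * (a * b) ^ 2 + 2 * (u * w) ^ 2 + (a * w) ^ 2 + (u * b) ^ 2)
    (by positivity) (by positivity) (by nlinarith [mul_nonneg hab.le huw]) (by positivity)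
    (by nlinarith [mul_nonneg hab.le huw])
  rw [Real.sqrt_mul (by positivity)] at key
  rw [sub_sq (√_), Real.sq_sqrt (by positivity), Real.sq_sqrt (by positivity)]
  linarith

theorem gaussian_interpolation_lower_bound_general
    (ma mb mγ : ℝ) (σa σb σγ : ℝ) (hσa : 0 < σa) (hσb : 0 < σb)
    (pa pb : ℝ) (hpa : pa ∈ Set.Ioc (0 : ℝ) 1) (hpb : pb ∈ Set.Ioc (0 : ℝ) 1) :
    W2sq (gaussianReal (ma + mγ) ((σa ^ 2 + pa ^ 2 * σγ ^ 2).toNNReal))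
        (gaussianReal (mb + mγ) ((σb ^ 2 + pb ^ 2 * σγ ^ 2).toNNReal))
      ≥ W2sq (gaussianReal ma ((σa ^ 2).toNNReal)) (gaussianReal mb ((σb ^ 2).toNNReal))
        + σγ ^ 2 * (pa - pb) ^ 2
        - 2 * (((σa * pb * σγ) ^ 2 + (pa * σb * σγ) ^ 2)
            / Real.sqrt (2 * (σa * σb) ^ 2 + 2 * (pa * pb * σγ ^ 2) ^ 2
                + (σa * pb * σγ) ^ 2 + (pa * σb * σγ) ^ 2)) := by
  rw [W2sq_gaussianReal _ _ (by positivity), W2sq_gaussianReal _ _ (by positivity),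
    Real.coe_toNNReal _ (by positivity), Real.coe_toNNReal _ (by positivity),
    Real.coe_toNNReal _ (by positivity), Real.coe_toNNReal _ (by positivity),
    Real.sqrt_sq hσa.le, Real.sqrt_sq hσb.le]
  have key := sq_sub_add_sq_sub_sub_le_sq_sqrt_sub_sqrt (u := pa * σγ) (w := pb * σγ)
    (mul_pos hσa hσb) (by nlinarith [mul_pos hpa.1 hpb.1, sq_nonneg σγ])
  ring_nf at key ⊢
  linarith

/-- For all means `m_a, m_b, m_γ ∈ ℝ`, standard deviations `σ_a, σ_b, σ_γ > 0`
and weights `p_a, p_b ∈ (0, 1]`: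
`W₂²(N(m_a + m_γ, σ_a² + p_a²σ_γ²), N(m_b + m_γ, σ_b² + p_b²σ_γ²))
  ≥ W₂²(N(m_a, σ_a²), N(m_b, σ_b²)) + σ_γ²·(p_a − p_b)²
    − 2·((σ_a p_b σ_γ)² + (p_a σ_b σ_γ)²)
      / √(2(σ_a σ_b)² + 2(p_a p_b σ_γ²)² + (σ_a p_b σ_γ)² + (p_a σ_b σ_γ)²)`. -/
theorem gaussian_interpolation_lower_bound
    (ma mb mγ : ℝ) (σa σb σγ : ℝ) (hσa : 0 < σa) (hσb : 0 < σb) (hσγ : 0 < σγ)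
    (pa pb : ℝ) (hpa : pa ∈ Set.Ioc (0 : ℝ) 1) (hpb : pb ∈ Set.Ioc (0 : ℝ) 1) :
    W2sq (gaussianReal (ma + mγ) ((σa ^ 2 + pa ^ 2 * σγ ^ 2).toNNReal))
        (gaussianReal (mb + mγ) ((σb ^ 2 + pb ^ 2 * σγ ^ 2).toNNReal))
      ≥ W2sq (gaussianReal ma ((σa ^ 2).toNNReal)) (gaussianReal mb ((σb ^ 2).toNNReal))
        + σγ ^ 2 * (pa - pb) ^ 2
        - 2 * (((σa * pb * σγ) ^ 2 + (pa * σb * σγ) ^ 2)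
            / Real.sqrt (2 * (σa * σb) ^ 2 + 2 * (pa * pb * σγ ^ 2) ^ 2
                + (σa * pb * σγ) ^ 2 + (pa * σb * σγ) ^ 2)) :=
  gaussian_interpolation_lower_bound_general ma mb mγ σa σb σγ hσa hσb pa pb hpa hpb
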